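/- There exists a unary MA-PFA M that verifies the language UPOWER = { a^(2^i) : i ≥ 0 } with cutpoint 1/2 using certificates of logarithmic length for members: for every i ≥ 0, Acc(i, 2^i) > 1/2, and for every n that is not a power of 2 and every i ≥ 0, Acc(i, n) ≤ 1/2. -/

import Mathlib

open Matrix

/-- A column-stochastic real matrix: nonnegative entries, every column sums to 1. -/
def ColStochastic {m : ℕ} (A : Matrix (Fin m) (Fin m) ℝ) : Prop :=
  (∀ i j, 0 ≤ A i j) ∧ ∀ j, ∑ i, A i j = 1

/-- The first standard basis column vector `e₁`. -/
def e1 (m : ℕ) : Fin m → ℝ := fun j => if j.val = 0 then 1 else 0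

/-- Acceptance probability of a unary MA-PFA with transition matrices
`Ao` (◐), `Aa` (letter a), `Acl` (◑), `Ace` (¢), `Ad` ($) and accepting states `F`,
on certificate `a^i` and input `a^n`. -/
noncomputable def pfaAcc {m : ℕ} (Ao Aa Acl Ace Ad : Matrix (Fin m) (Fin m) ℝ)
    (F : Finset (Fin m)) (i n : ℕ) : ℝ :=
  ∑ j ∈ F, (Ad * Aa ^ n * Ace * Acl * Aa ^ i * Ao).mulVec (e1 m) j

/-!
States are numbered from 0, the start state. On ◐ the mass moves evenly to states 1, 2, 3, which
each certificate letter shrinks by the factors 1/16, 1/8, 1/4 (the lost mass drains into the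
absorbing state 4), so after `a^i` they carry weights proportional to `16⁻ⁱ · (1, 2ⁱ, 4ⁱ)`.
The marker ¢ passes half of the mass of 2 to 5, half of 3 to 8, and a quarter of 1 to each
of 7 and 9. Per input letter the states 5, …, 11 keep a quarter of their mass, and 5 → 6 and
9 → 10 → 11 pass half of it one step down the chain, so after `a^n` the states at depth
0, 1, 2 of a chain hold `4⁻ⁿ` times its initial mass times `1`, `2n`, `2n (n - 1)`. The marker
$ accepts from 6 and 7, rejects from 8, 10 and 11 and tosses a fair coin elsewhere, whence
  `Acc(i, n) = 1/2 + 4⁻ⁿ 16⁻ⁱ / 24 · (1 - 2 (n - 2ⁱ)²)`,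
which exceeds `1/2` iff `n = 2ⁱ`.
-/

theorem Fin.sum_univ_twelve {M : Type*} [AddCommMonoid M] (f : Fin 12 → M) :
    ∑ k, f k = f 0 + f 1 + f 2 + f 3 + f 4 + f 5 + f 6 + f 7 + f 8 + f 9 + f 10 + f 11 := by
  simp only [Fin.sum_univ_succ, Fin.sum_univ_zero, add_zero, add_assoc]
  rfl

theorem Matrix.pow_mulVec_eq_of_mulVec_eq_succ {n R : Type*} [Fintype n] [DecidableEq n]
    [CommSemiring R] (M : Matrix n n R) (v : ℕ → n → R) (hv : ∀ k, M *ᵥ v k = v (k + 1))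
    (k : ℕ) : M ^ k *ᵥ v 0 = v k := by
  induction k with
  | zero => rw [pow_zero, one_mulVec]
  | succ k ih => rw [pow_succ', ← mulVec_mulVec, ih, hv]

theorem colStochastic_one (m : ℕ) : ColStochastic (1 : Matrix (Fin m) (Fin m) ℝ) :=
  ⟨fun i j => by rw [one_apply]; positivity, fun j => by simp [one_apply]⟩

theorem pfaAcc_eq_sum_mulVec {m : ℕ} (Ao Aa Acl Ace Ad : Matrix (Fin m) (Fin m) ℝ)
    (F : Finset (Fin m)) (i n : ℕ) :
    pfaAcc Ao Aa Acl Ace Ad F i n =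
      ∑ j ∈ F, (Ad *ᵥ (Aa ^ n *ᵥ (Ace *ᵥ (Acl *ᵥ (Aa ^ i *ᵥ (Ao *ᵥ e1 m)))))) j := by
  simp only [pfaAcc, mulVec_mulVec, Matrix.mul_assoc]

theorem one_le_sq_natCast_sub_of_ne {a b : ℕ} (h : a ≠ b) : 1 ≤ ((a : ℝ) - b) ^ 2 := by
  have h' : ((a : ℤ) - b) ≠ 0 := sub_ne_zero.mpr (by exact_mod_cast h)
  exact_mod_cast one_le_sq_iff_one_le_abs _ |>.mpr (Int.one_le_abs h')

namespace UPower

noncomputable def certOpen : Matrix (Fin 12) (Fin 12) ℝ := of fun i j =>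
  if j.val = 0 then
    (if i.val = 1 then 1/3 else if i.val = 2 then 1/3 else if i.val = 3 then 1/3 else 0)
  else (if i.val = 4 then 1 else 0)

noncomputable def letter : Matrix (Fin 12) (Fin 12) ℝ := of fun i j =>
  if j.val = 1 then (if i.val = 1 then 1/16 else if i.val = 4 then 15/16 else 0)
  else if j.val = 2 then (if i.val = 2 then 1/8 else if i.val = 4 then 7/8 else 0)
  else if j.val = 3 then (if i.val = 3 then 1/4 else if i.val = 4 then 3/4 else 0)
  else if j.val = 5 then
    (if i.val = 5 then 1/4 else if i.val = 6 then 1/2 else if i.val = 4 then 1/4 else 0)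
  else if j.val = 6 then (if i.val = 6 then 1/4 else if i.val = 4 then 3/4 else 0)
  else if j.val = 7 then (if i.val = 7 then 1/4 else if i.val = 4 then 3/4 else 0)
  else if j.val = 8 then (if i.val = 8 then 1/4 else if i.val = 4 then 3/4 else 0)
  else if j.val = 9 then
    (if i.val = 9 then 1/4 else if i.val = 10 then 1/2 else if i.val = 4 then 1/4 else 0)
  else if j.val = 10 then
    (if i.val = 10 then 1/4 else if i.val = 11 then 1/2 else if i.val = 4 then 1/4 else 0)
  else if j.val = 11 then (if i.val = 11 then 1/4 else if i.val = 4 then 3/4 else 0)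
  else (if i.val = 4 then 1 else 0)

noncomputable def inputOpen : Matrix (Fin 12) (Fin 12) ℝ := of fun i j =>
  if j.val = 1 then
    (if i.val = 7 then 1/4 else if i.val = 9 then 1/4 else if i.val = 4 then 1/2 else 0)
  else if j.val = 2 then (if i.val = 5 then 1/2 else if i.val = 4 then 1/2 else 0)
  else if j.val = 3 then (if i.val = 8 then 1/2 else if i.val = 4 then 1/2 else 0)
  else (if i.val = 4 then 1 else 0)

noncomputable def inputClose : Matrix (Fin 12) (Fin 12) ℝ := of fun i j =>
  if j.val = 6 ∨ j.val = 7 then (if i.val = 7 then 1 else 0)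
  else if j.val = 8 ∨ j.val = 10 ∨ j.val = 11 then (if i.val = 4 then 1 else 0)
  else (if i.val = 7 then 1/2 else if i.val = 4 then 1/2 else 0)

theorem colStochastic_certOpen : ColStochastic certOpen := by
  refine ⟨fun i j => ?_, fun j => ?_⟩
  · simp only [certOpen, of_apply]
    positivity
  · fin_cases j <;> simp only [certOpen, of_apply, Fin.sum_univ_twelve] <;> norm_num

theorem colStochastic_letter : ColStochastic letter := by
  refine ⟨fun i j => ?_, fun j => ?_⟩
  · simp only [letter, of_apply]
    positivity
  · fin_cases j <;> simp only [letter, of_apply, Fin.sum_univ_twelve] <;> norm_num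

theorem colStochastic_inputOpen : ColStochastic inputOpen := by
  refine ⟨fun i j => ?_, fun j => ?_⟩
  · simp only [inputOpen, of_apply]
    positivity
  · fin_cases j <;> simp only [inputOpen, of_apply, Fin.sum_univ_twelve] <;> norm_num

theorem colStochastic_inputClose : ColStochastic inputClose := by
  refine ⟨fun i j => ?_, fun j => ?_⟩
  · simp only [inputClose, of_apply]
    positivity
  · fin_cases j <;> simp only [inputClose, of_apply, Fin.sum_univ_twelve] <;> norm_num

noncomputable def afterCert (i : ℕ) : Fin 12 → ℝ := fun j =>
  if j.val = 1 then (1/3) * (1/16)^i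
  else if j.val = 2 then (1/3) * (1/8)^i
  else if j.val = 3 then (1/3) * (1/4)^i
  else if j.val = 4 then 1 - (1/3) * (1/16)^i - (1/3) * (1/8)^i - (1/3) * (1/4)^i
  else 0

noncomputable def afterInput (i n : ℕ) : Fin 12 → ℝ := fun j =>
  if j.val = 5 then (1/6) * (1/8)^i * (1/4)^n
  else if j.val = 6 then (1/3) * (1/8)^i * n * (1/4)^n
  else if j.val = 7 then (1/12) * (1/16)^i * (1/4)^n
  else if j.val = 8 then (1/6) * (1/4)^i * (1/4)^n
  else if j.val = 9 then (1/12) * (1/16)^i * (1/4)^n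
  else if j.val = 10 then (1/6) * (1/16)^i * n * (1/4)^n
  else if j.val = 11 then (1/6) * (1/16)^i * n * (n - 1) * (1/4)^n
  else if j.val = 4 then 1 - ((1/6) * (1/8)^i + (1/3) * (1/8)^i * n + (1/6) * (1/16)^i
      + (1/6) * (1/4)^i + (1/6) * (1/16)^i * n + (1/6) * (1/16)^i * n * (n - 1)) * (1/4)^n
  else 0

theorem certOpen_mulVec_e1 : certOpen *ᵥ e1 12 = afterCert 0 := by
  ext j
  simp only [mulVec, dotProduct, Fin.sum_univ_twelve]
  fin_cases j <;> norm_num [certOpen, afterCert, e1]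

theorem letter_mulVec_afterCert (i : ℕ) : letter *ᵥ afterCert i = afterCert (i + 1) := by
  ext j
  simp only [mulVec, dotProduct, Fin.sum_univ_twelve]
  fin_cases j <;> norm_num [letter, afterCert, pow_succ] <;> ring

theorem inputOpen_mulVec_afterCert (i : ℕ) : inputOpen *ᵥ afterCert i = afterInput i 0 := by
  ext j
  simp only [mulVec, dotProduct, Fin.sum_univ_twelve]
  fin_cases j <;> norm_num [inputOpen, afterCert, afterInput] <;> ring

theorem letter_mulVec_afterInput (i n : ℕ) :
    letter *ᵥ afterInput i n = afterInput i (n + 1) := by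
  ext j
  simp only [mulVec, dotProduct, Fin.sum_univ_twelve]
  fin_cases j <;> norm_num [letter, afterInput, pow_succ] <;> ring

theorem inputClose_mulVec_afterInput_seven (i n : ℕ) :
    (inputClose *ᵥ afterInput i n) 7 =
      1/2 + (1/4)^n * (1/16)^i / 24 * (1 - 2 * (n - 2^i)^2) := by
  have h8 : (1/8 : ℝ)^i = (1/16)^i * 2^i := by rw [← mul_pow]; norm_num
  have h4 : (1/4 : ℝ)^i = (1/16)^i * 2^i * 2^i := by
    rw [mul_assoc, ← mul_pow, ← mul_pow]; norm_num
  simp only [mulVec, dotProduct, Fin.sum_univ_twelve]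
  norm_num [inputClose, afterInput]
  rw [h8, h4]
  ring

theorem pfaAcc_eq (i n : ℕ) :
    pfaAcc certOpen letter 1 inputOpen inputClose {7} i n =
      1/2 + (1/4)^n * (1/16)^i / 24 * (1 - 2 * (n - 2^i)^2) := by
  rw [pfaAcc_eq_sum_mulVec, Finset.sum_singleton, one_mulVec, certOpen_mulVec_e1,
    pow_mulVec_eq_of_mulVec_eq_succ _ _ letter_mulVec_afterCert, inputOpen_mulVec_afterCert,
    pow_mulVec_eq_of_mulVec_eq_succ _ _ (letter_mulVec_afterInput i),
    inputClose_mulVec_afterInput_seven]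

end UPower

open UPower

/-- some unary MA-PFA verifies `UPOWER = { a^(2^i) }` with cutpoint 1/2,
using certificates of logarithmic length for members. -/
theorem mapfa_upower :
    ∃ (m : ℕ) (Ao Aa Acl Ace Ad : Matrix (Fin m) (Fin m) ℝ) (F : Finset (Fin m)),
      ColStochastic Ao ∧ ColStochastic Aa ∧ ColStochastic Acl ∧
      ColStochastic Ace ∧ ColStochastic Ad ∧
      (∀ i : ℕ, 1 / 2 < pfaAcc Ao Aa Acl Ace Ad F i (2 ^ i)) ∧
      (∀ n : ℕ, (¬ ∃ i : ℕ, n = 2 ^ i) → ∀ i : ℕ,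
        pfaAcc Ao Aa Acl Ace Ad F i n ≤ 1 / 2) := by
  refine ⟨12, certOpen, letter, 1, inputOpen, inputClose, {7}, colStochastic_certOpen,
    colStochastic_letter, colStochastic_one 12, colStochastic_inputOpen, colStochastic_inputClose,
    fun i => ?_, fun n hn i => ?_⟩
  · rw [pfaAcc_eq]
    push_cast
    norm_num
  · have hsq := one_le_sq_natCast_sub_of_ne (a := n) (b := 2 ^ i) fun h => hn ⟨i, h⟩
    push_cast at hsq
    rw [pfaAcc_eq, add_le_iff_nonpos_right]
    exact mul_nonpos_of_nonneg_of_nonpos (by positivity) (by linarith)
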